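/- arXiv:2406.06047 — 5 statements merged into one kernel-verified Lean document; each statement's English description precedes it below -/
import Mathlib

section
/- Transformation law for foliation-frame covector components under foliation-changing diffeomorphisms (Eq. (2.11)): let ε ∈ {−1,+1}, let (N, n, ĝ) be real ADM data, let J be a Jacobian, assume D_ε² > 0, and set D := √(D_ε²) > 0, N' := N/D, with n' the transf_ε-primed shift. Given foliation-frame components (v, v₁,…,v_d) ∈ ℝ^{d+1}, define v' := (C v + εN Σ_{c,d} σ_c ĝ^{cd} v_d)/D and v'_a := Σ_b (K^b_a + k_a n^b) v_b + N k_a v. Then the coordinate components agree: the vector w ∈ ℝ^{d+1} with w₀ = vN + Σ_a v_a n^a and w_b = v_b, and the vector w' ∈ ℝ^{d+1} with w'₀ = v'N' + Σ_a v'_a n'^a and w'_b = v'_b, satisfy w = Jᵀ w'. (That is, v N dt + v_a e^a = v' N' dt' + v'_a e'^a as covectors, where e^a = dx^a + n^a dt.) -/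
open Matrix Complex BigOperators

noncomputable section

/-- The ADM matrix `A(ε, λ, n, ĝ)` representing the line element
`ε λ dt² + ĝ_{ab}(dx^a + n^a dt)(dx^b + n^b dt)`. -/
def ADM {R : Type*} [CommRing R] {d : ℕ} (ε lam : R) (n : Fin d → R)
    (g : Matrix (Fin d) (Fin d) R) : Matrix (Fin (d+1)) (Fin (d+1)) R :=
  Matrix.of fun i j =>
    Fin.cases
      (Fin.cases (ε * lam + ∑ a, ∑ b, g a b * n a * n b)
        (fun a => ∑ b, g a b * n b) j)
      (fun a => Fin.cases (∑ b, g a b * n b) (fun b => g a b) j) i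

variable {d : ℕ}

/-- Block `τ = ∂t'/∂t` of a Jacobian. -/
def tauJ (J : Matrix (Fin (d+1)) (Fin (d+1)) ℝ) : ℝ := J 0 0

/-- Block `σ_c = ∂t'/∂x^c` of a Jacobian. -/
def sigJ (J : Matrix (Fin (d+1)) (Fin (d+1)) ℝ) : Fin d → ℝ := fun c => J 0 c.succ

/-- Block `ρ^a = ∂x'^a/∂t` of a Jacobian. -/
def rhoJ (J : Matrix (Fin (d+1)) (Fin (d+1)) ℝ) : Fin d → ℝ := fun a => J a.succ 0

/-- Block `X^a_c = ∂x'^a/∂x^c` of a Jacobian. -/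
def XJ (J : Matrix (Fin (d+1)) (Fin (d+1)) ℝ) : Matrix (Fin d) (Fin d) ℝ :=
  Matrix.of fun a c => J a.succ c.succ

/-- Block `k_a = (J⁻¹)₀ₐ` of the inverse Jacobian. -/
def kJ (J : Matrix (Fin (d+1)) (Fin (d+1)) ℝ) : Fin d → ℝ := fun a => J⁻¹ 0 a.succ

/-- Block `K^c_a = (J⁻¹)_{ca}` of the inverse Jacobian. -/
def KJ (J : Matrix (Fin (d+1)) (Fin (d+1)) ℝ) : Matrix (Fin d) (Fin d) ℝ :=
  Matrix.of fun c a => J⁻¹ c.succ a.succ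

/-- `C = τ - Σ_c σ_c n^c`. -/
def CJ (J : Matrix (Fin (d+1)) (Fin (d+1)) ℝ) (n : Fin d → ℝ) : ℝ :=
  tauJ J - ∑ c, sigJ J c * n c

/-- `σᵀ ĝ⁻¹ σ`. -/
def sgsJ (J : Matrix (Fin (d+1)) (Fin (d+1)) ℝ) (g : Matrix (Fin d) (Fin d) ℝ) : ℝ :=
  ∑ c, ∑ e, sigJ J c * g⁻¹ c e * sigJ J e

/-- `(X ĝ⁻¹ σ)^a`. -/
def Xgs (J : Matrix (Fin (d+1)) (Fin (d+1)) ℝ) (g : Matrix (Fin d) (Fin d) ℝ) :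
    Fin d → ℝ := fun a => ∑ c, ∑ e, XJ J a c * g⁻¹ c e * sigJ J e

/-- `(ρ - X n)^a`. -/
def rXn (J : Matrix (Fin (d+1)) (Fin (d+1)) ℝ) (n : Fin d → ℝ) : Fin d → ℝ :=
  fun a => rhoJ J a - ∑ c, XJ J a c * n c

/-- `D_ε² = C² + ε N² σᵀĝ⁻¹σ`. -/
def Deps2 (J : Matrix (Fin (d+1)) (Fin (d+1)) ℝ) (ε N : ℝ) (n : Fin d → ℝ)
    (g : Matrix (Fin d) (Fin d) ℝ) : ℝ :=
  (CJ J n)^2 + ε * N^2 * sgsJ J g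

/-- transf_ε primed squared lapse `N'² = N²/D_ε²`. -/
def NP2 (J : Matrix (Fin (d+1)) (Fin (d+1)) ℝ) (ε N : ℝ) (n : Fin d → ℝ)
    (g : Matrix (Fin d) (Fin d) ℝ) : ℝ := N^2 / Deps2 J ε N n g

/-- transf_ε primed shift `n'^a`. -/
def shiftP (J : Matrix (Fin (d+1)) (Fin (d+1)) ℝ) (ε N : ℝ) (n : Fin d → ℝ)
    (g : Matrix (Fin d) (Fin d) ℝ) : Fin d → ℝ := fun a =>
  -((rXn J n a) * CJ J n + ε * N^2 * Xgs J g a) / Deps2 J ε N n g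

/-- transf_ε primed spatial metric `ĝ'_{ab}`. -/
def ghP (J : Matrix (Fin (d+1)) (Fin (d+1)) ℝ) (ε N : ℝ) (n : Fin d → ℝ)
    (g : Matrix (Fin d) (Fin d) ℝ) : Matrix (Fin d) (Fin d) ℝ :=
  Matrix.of fun a b =>
    (∑ c, ∑ e, (KJ J c a + kJ J a * n c) * (KJ J e b + kJ J b * n e) * g c e)
    + ε * N^2 * kJ J a * kJ J b

/-- The Wick phase `e^{-2iθ}`. -/
def wick (θ : ℝ) : ℂ := Complex.exp (-2 * Complex.I * θ)

/-- `D_θ² = C² - e^{-2iθ} N² σᵀĝ⁻¹σ`. -/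
def Dth2 (J : Matrix (Fin (d+1)) (Fin (d+1)) ℝ) (θ N : ℝ) (n : Fin d → ℝ)
    (g : Matrix (Fin d) (Fin d) ℝ) : ℂ :=
  (CJ J n : ℂ)^2 - wick θ * (N:ℂ)^2 * (sgsJ J g : ℂ)

/-- lapse-Wick-rotated primed squared lapse `λ'_θ = e^{-2iθ}N²/D_θ²`. -/
def lamW (J : Matrix (Fin (d+1)) (Fin (d+1)) ℝ) (θ N : ℝ) (n : Fin d → ℝ)
    (g : Matrix (Fin d) (Fin d) ℝ) : ℂ :=
  wick θ * (N:ℂ)^2 / Dth2 J θ N n g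

/-- lapse-Wick-rotated primed shift `n'_θ{}^a`. -/
def shiftW (J : Matrix (Fin (d+1)) (Fin (d+1)) ℝ) (θ N : ℝ) (n : Fin d → ℝ)
    (g : Matrix (Fin d) (Fin d) ℝ) : Fin d → ℂ := fun a =>
  -((rXn J n a : ℂ) * (CJ J n : ℂ) - wick θ * (N:ℂ)^2 * (Xgs J g a : ℂ)) / Dth2 J θ N n g

/-- lapse-Wick-rotated primed spatial metric `(ĝ'^θ)_{ab}`. -/
def ghW (J : Matrix (Fin (d+1)) (Fin (d+1)) ℝ) (θ N : ℝ) (n : Fin d → ℝ)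
    (g : Matrix (Fin d) (Fin d) ℝ) : Matrix (Fin d) (Fin d) ℂ :=
  Matrix.of fun a b =>
    ((∑ c, ∑ e, (KJ J c a + kJ J a * n c) * (KJ J e b + kJ J b * n e) * g c e : ℝ) : ℂ)
    - wick θ * (N:ℂ)^2 * (kJ J a : ℂ) * (kJ J b : ℂ)

/-- Eq. (2.11): transformation law for foliation-frame covector components under
foliation-changing diffeomorphisms: `v N dt + v_a e^a = v' N' dt' + v'_a e'^a`. -/
theorem covector_transformation (d : ℕ) (hd : 1 ≤ d) (ε : ℝ) (hε : ε = -1 ∨ ε = 1)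
    (N : ℝ) (hN : 0 < N) (n : Fin d → ℝ)
    (g : Matrix (Fin d) (Fin d) ℝ) (hgs : g.IsSymm) (hg : g.PosDef)
    (J : Matrix (Fin (d+1)) (Fin (d+1)) ℝ) (hJ : IsUnit J.det)
    (hD : 0 < Deps2 J ε N n g)
    (v : ℝ) (vs : Fin d → ℝ) :
    let D : ℝ := Real.sqrt (Deps2 J ε N n g)
    let N' : ℝ := N / D
    let n' : Fin d → ℝ := shiftP J ε N n g
    let v' : ℝ := (CJ J n * v + ε * N * ∑ c, ∑ e, sigJ J c * g⁻¹ c e * vs e) / D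
    let vs' : Fin d → ℝ := fun a => (∑ b, (KJ J b a + kJ J a * n b) * vs b) + N * kJ J a * v
    (Fin.cases (v * N + ∑ a, vs a * n a) vs : Fin (d+1) → ℝ)
      = Jᵀ.mulVec (Fin.cases (v' * N' + ∑ a, vs' a * n' a) vs') := by
  intro D N' n' v' vs'
  have hD2 : Deps2 J ε N n g ≠ 0 := ne_of_gt hD
  have hDpos : 0 < D := Real.sqrt_pos.mpr hD
  have hDne : D ≠ 0 := ne_of_gt hDpos
  have hDsq : D * D = Deps2 J ε N n g := Real.mul_self_sqrt hD.le
  have hKJ : J⁻¹ * J = 1 := Matrix.nonsing_inv_mul J hJ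
  have hrel : ∀ i j, (∑ l, J⁻¹ i l * J l j) = if i = j then (1:ℝ) else 0 := by
    intro i j
    have h := congrFun (congrFun hKJ i) j
    simpa [Matrix.mul_apply, Matrix.one_apply] using h
  -- block relations from K * J = 1
  have R1 : J⁻¹ 0 0 * tauJ J + ∑ c, kJ J c * rhoJ J c = 1 := by
    have h := hrel 0 0
    rw [Fin.sum_univ_succ] at h
    simpa [tauJ, kJ, rhoJ] using h
  have R2 : ∀ b, J⁻¹ 0 0 * sigJ J b + ∑ c, kJ J c * XJ J c b = 0 := by
    intro b
    have h := hrel 0 b.succ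
    rw [Fin.sum_univ_succ] at h
    simpa [sigJ, kJ, XJ, (Fin.succ_ne_zero b).symm] using h
  have R3 : ∀ a, J⁻¹ a.succ 0 * tauJ J + ∑ c, KJ J a c * rhoJ J c = 0 := by
    intro a
    have h := hrel a.succ 0
    rw [Fin.sum_univ_succ] at h
    simpa [tauJ, KJ, rhoJ, Fin.succ_ne_zero a] using h
  have R4 : ∀ a b, J⁻¹ a.succ 0 * sigJ J b + ∑ c, KJ J a c * XJ J c b
      = if a = b then (1:ℝ) else 0 := by
    intro a b
    have h := hrel a.succ b.succ
    rw [Fin.sum_univ_succ] at h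
    simpa [sigJ, KJ, XJ, Fin.succ_inj] using h
  -- abbreviation: G c = (ĝ⁻¹ σ)_c
  set G : Fin d → ℝ := fun c => ∑ e, g⁻¹ c e * sigJ J e with hG
  have hSdef : sgsJ J g = ∑ c, sigJ J c * G c := by
    simp [sgsJ, hG, Finset.mul_sum, mul_assoc]
  have hXgs : ∀ a, Xgs J g a = ∑ c, XJ J a c * G c := by
    intro a; simp [Xgs, hG, Finset.mul_sum, mul_assoc]
  -- symmetry of g⁻¹
  have hginv : ∀ c e, g⁻¹ c e = g⁻¹ e c := by
    intro c e
    have h : (g⁻¹)ᵀ = g⁻¹ := by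
      rw [Matrix.transpose_nonsing_inv, hgs.eq]
    have h2 := congrFun (congrFun h e) c
    rw [Matrix.transpose_apply] at h2
    exact h2
  -- contraction identities
  have P3 : ∑ a, kJ J a * rXn J n a = 1 - J⁻¹ 0 0 * CJ J n := by
    have e1 : ∀ a, kJ J a * rXn J n a
        = kJ J a * rhoJ J a - ∑ c, kJ J a * XJ J a c * n c := by
      intro a; simp [rXn, mul_sub, Finset.mul_sum, mul_assoc]
    rw [Finset.sum_congr rfl fun a _ => e1 a, Finset.sum_sub_distrib, Finset.sum_comm]
    have e2 : ∀ c, ∑ a, kJ J a * XJ J a c * n c = -(J⁻¹ 0 0 * sigJ J c) * n c := by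
      intro c
      rw [← Finset.sum_mul]
      have h2 : ∑ a, kJ J a * XJ J a c = -(J⁻¹ 0 0 * sigJ J c) := by linarith [R2 c]
      rw [h2]
    rw [Finset.sum_congr rfl fun c _ => e2 c]
    have h1 : ∑ c, kJ J c * rhoJ J c = 1 - J⁻¹ 0 0 * tauJ J := by linarith [R1]
    rw [h1]
    have e3 : ∑ c, -(J⁻¹ 0 0 * sigJ J c) * n c
        = -(J⁻¹ 0 0) * ∑ c, sigJ J c * n c := by
      rw [Finset.mul_sum]
      exact Finset.sum_congr rfl fun c _ => by ring
    rw [e3]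
    simp only [CJ]
    ring
  have P4 : ∑ a, kJ J a * Xgs J g a = -(J⁻¹ 0 0) * sgsJ J g := by
    have e1 : ∀ a, kJ J a * Xgs J g a = ∑ c, kJ J a * XJ J a c * G c := by
      intro a; rw [hXgs a, Finset.mul_sum]
      exact Finset.sum_congr rfl fun c _ => by ring
    rw [Finset.sum_congr rfl fun a _ => e1 a, Finset.sum_comm]
    have e2 : ∀ c, ∑ a, kJ J a * XJ J a c * G c = -(J⁻¹ 0 0 * sigJ J c) * G c := by
      intro c
      rw [← Finset.sum_mul]
      have h2 : ∑ a, kJ J a * XJ J a c = -(J⁻¹ 0 0 * sigJ J c) := by linarith [R2 c]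
      rw [h2]
    rw [Finset.sum_congr rfl fun c _ => e2 c, hSdef, Finset.mul_sum]
    exact Finset.sum_congr rfl fun c _ => by ring
  have P1 : ∀ b, ∑ a, KJ J b a * rXn J n a = -(J⁻¹ b.succ 0) * CJ J n - n b := by
    intro b
    have e1 : ∀ a, KJ J b a * rXn J n a
        = KJ J b a * rhoJ J a - ∑ c, KJ J b a * XJ J a c * n c := by
      intro a; simp [rXn, mul_sub, Finset.mul_sum, mul_assoc]
    rw [Finset.sum_congr rfl fun a _ => e1 a, Finset.sum_sub_distrib, Finset.sum_comm]
    have h3 : ∑ c, KJ J b c * rhoJ J c = -(J⁻¹ b.succ 0 * tauJ J) := by linarith [R3 b]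
    rw [h3]
    have e2 : ∀ c, ∑ a, KJ J b a * XJ J a c * n c
        = ((if b = c then (1:ℝ) else 0) - J⁻¹ b.succ 0 * sigJ J c) * n c := by
      intro c
      rw [← Finset.sum_mul]
      have h4 : ∑ a, KJ J b a * XJ J a c
          = (if b = c then (1:ℝ) else 0) - J⁻¹ b.succ 0 * sigJ J c := by
        have := R4 b c; linarith
      rw [h4]
    rw [Finset.sum_congr rfl fun c _ => e2 c]
    have e3 : ∑ c, ((if b = c then (1:ℝ) else 0) - J⁻¹ b.succ 0 * sigJ J c) * n c
        = n b - J⁻¹ b.succ 0 * ∑ c, sigJ J c * n c := by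
      rw [Finset.mul_sum]
      rw [show n b = ∑ c, (if b = c then (1:ℝ) else 0) * n c by simp]
      rw [← Finset.sum_sub_distrib]
      exact Finset.sum_congr rfl fun c _ => by ring
    rw [e3]
    simp only [CJ]
    ring
  have P2 : ∀ b, ∑ a, KJ J b a * Xgs J g a
      = G b - J⁻¹ b.succ 0 * sgsJ J g := by
    intro b
    have e1 : ∀ a, KJ J b a * Xgs J g a = ∑ c, KJ J b a * XJ J a c * G c := by
      intro a; rw [hXgs a, Finset.mul_sum]
      exact Finset.sum_congr rfl fun c _ => by ring
    rw [Finset.sum_congr rfl fun a _ => e1 a, Finset.sum_comm]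
    have e2 : ∀ c, ∑ a, KJ J b a * XJ J a c * G c
        = ((if b = c then (1:ℝ) else 0) - J⁻¹ b.succ 0 * sigJ J c) * G c := by
      intro c
      rw [← Finset.sum_mul]
      have h4 : ∑ a, KJ J b a * XJ J a c
          = (if b = c then (1:ℝ) else 0) - J⁻¹ b.succ 0 * sigJ J c := by
        have := R4 b c; linarith
      rw [h4]
    rw [Finset.sum_congr rfl fun c _ => e2 c]
    have e3 : ∑ c, ((if b = c then (1:ℝ) else 0) - J⁻¹ b.succ 0 * sigJ J c) * G c
        = G b - J⁻¹ b.succ 0 * ∑ c, sigJ J c * G c := by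
      rw [Finset.mul_sum]
      rw [show G b = ∑ c, (if b = c then (1:ℝ) else 0) * G c by simp]
      rw [← Finset.sum_sub_distrib]
      exact Finset.sum_congr rfl fun c _ => by ring
    rw [e3, hSdef]
  -- contractions against Φ a := rXn a * C + ε N² Xgs a
  have hA : ∑ a, kJ J a * (rXn J n a * CJ J n + ε * N ^ 2 * Xgs J g a)
      = CJ J n - J⁻¹ 0 0 * Deps2 J ε N n g := by
    have e : ∀ a, kJ J a * (rXn J n a * CJ J n + ε * N ^ 2 * Xgs J g a)
        = kJ J a * rXn J n a * CJ J n + ε * N ^ 2 * (kJ J a * Xgs J g a) := by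
      intro a; ring
    rw [Finset.sum_congr rfl fun a _ => e a, Finset.sum_add_distrib, ← Finset.sum_mul,
      ← Finset.mul_sum, P3, P4]
    simp only [Deps2]
    ring
  have hB : ∀ b, ∑ a, KJ J b a * (rXn J n a * CJ J n + ε * N ^ 2 * Xgs J g a)
      = -(J⁻¹ b.succ 0) * Deps2 J ε N n g - CJ J n * n b + ε * N ^ 2 * G b := by
    intro b
    have e : ∀ a, KJ J b a * (rXn J n a * CJ J n + ε * N ^ 2 * Xgs J g a)
        = KJ J b a * rXn J n a * CJ J n + ε * N ^ 2 * (KJ J b a * Xgs J g a) := by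
      intro a; ring
    rw [Finset.sum_congr rfl fun a _ => e a, Finset.sum_add_distrib, ← Finset.sum_mul,
      ← Finset.mul_sum, P1 b, P2 b]
    simp only [Deps2]
    ring
  -- sum over the primed components
  have hsum : ∑ a, vs' a * (rXn J n a * CJ J n + ε * N ^ 2 * Xgs J g a)
      = (∑ b, vs b * (-(J⁻¹ b.succ 0) * Deps2 J ε N n g - CJ J n * n b + ε * N ^ 2 * G b))
        + (∑ b, vs b * n b) * (CJ J n - J⁻¹ 0 0 * Deps2 J ε N n g)
        + N * v * (CJ J n - J⁻¹ 0 0 * Deps2 J ε N n g) := by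
    have e : ∀ a, vs' a * (rXn J n a * CJ J n + ε * N ^ 2 * Xgs J g a)
        = (∑ b, (KJ J b a * (rXn J n a * CJ J n + ε * N ^ 2 * Xgs J g a) * vs b
            + kJ J a * (rXn J n a * CJ J n + ε * N ^ 2 * Xgs J g a) * (vs b * n b)))
          + N * v * (kJ J a * (rXn J n a * CJ J n + ε * N ^ 2 * Xgs J g a)) := by
      intro a
      show ((∑ b, (KJ J b a + kJ J a * n b) * vs b) + N * kJ J a * v) * _ = _
      rw [add_mul, Finset.sum_mul]
      congr 1
      · exact Finset.sum_congr rfl fun b _ => by ring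
      · ring
    rw [Finset.sum_congr rfl fun a _ => e a, Finset.sum_add_distrib, ← Finset.mul_sum, hA]
    congr 1
    simp only [Finset.sum_add_distrib]
    congr 1
    · rw [Finset.sum_comm]
      refine Finset.sum_congr rfl fun b _ => ?_
      rw [← hB b, Finset.mul_sum]
      exact Finset.sum_congr rfl fun a _ => by ring
    · rw [Finset.sum_comm, Finset.sum_mul]
      refine Finset.sum_congr rfl fun b _ => ?_
      rw [← hA, Finset.mul_sum]
      exact Finset.sum_congr rfl fun a _ => by ring
  have hexp : ∑ b, vs b * (-(J⁻¹ b.succ 0) * Deps2 J ε N n g - CJ J n * n b + ε * N ^ 2 * G b)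
      = -((∑ b, J⁻¹ b.succ 0 * vs b) * Deps2 J ε N n g)
        - CJ J n * (∑ b, vs b * n b) + ε * N ^ 2 * (∑ b, vs b * G b) := by
    rw [Finset.sum_mul, Finset.mul_sum, Finset.mul_sum, ← Finset.sum_neg_distrib,
      ← Finset.sum_sub_distrib, ← Finset.sum_add_distrib]
    exact Finset.sum_congr rfl fun b _ => by ring
  have hTsym : (∑ c, ∑ e, sigJ J c * g⁻¹ c e * vs e) = ∑ b, vs b * G b := by
    rw [Finset.sum_comm]
    refine Finset.sum_congr rfl fun e _ => ?_
    simp only [hG, Finset.mul_sum]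
    refine Finset.sum_congr rfl fun c _ => ?_
    rw [hginv c e]; ring
  -- the key identity: primed components = (J⁻¹)ᵀ acting on unprimed components
  have key : (Fin.cases (v' * N' + ∑ a, vs' a * n' a) vs' : Fin (d+1) → ℝ)
      = (J⁻¹)ᵀ.mulVec (Fin.cases (v * N + ∑ a, vs a * n a) vs) := by
    funext i
    refine Fin.cases ?_ ?_ i
    · show v' * N' + ∑ a, vs' a * n' a = _
      have hmv : (J⁻¹)ᵀ.mulVec (Fin.cases (v * N + ∑ a, vs a * n a) vs) 0
          = J⁻¹ 0 0 * (v * N + ∑ a, vs a * n a) + ∑ b, J⁻¹ b.succ 0 * vs b := by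
        simp [Matrix.mulVec, dotProduct, Fin.sum_univ_succ]
      rw [hmv]
      have hv'N' : v' * N'
          = (CJ J n * v + ε * N * ∑ c, ∑ e, sigJ J c * g⁻¹ c e * vs e) * N
            / Deps2 J ε N n g := by
        show ((CJ J n * v + ε * N * ∑ c, ∑ e, sigJ J c * g⁻¹ c e * vs e) / D) * (N / D) = _
        rw [div_mul_div_comm, hDsq]
      have hshift : ∑ a, vs' a * n' a
          = (-(∑ a, vs' a * (rXn J n a * CJ J n + ε * N ^ 2 * Xgs J g a)))
            / Deps2 J ε N n g := by
        rw [← Finset.sum_neg_distrib, Finset.sum_div]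
        refine Finset.sum_congr rfl fun a _ => ?_
        show vs' a * (-(rXn J n a * CJ J n + ε * N ^ 2 * Xgs J g a) / Deps2 J ε N n g) = _
        rw [← mul_div_assoc, mul_neg]
      rw [hv'N', hshift, ← add_div, div_eq_iff hD2, hsum, hexp, hTsym]
      ring
    · intro a
      show vs' a = _
      have hmv : (J⁻¹)ᵀ.mulVec (Fin.cases (v * N + ∑ a, vs a * n a) vs) a.succ
          = J⁻¹ 0 a.succ * (v * N + ∑ b, vs b * n b)
            + ∑ b, J⁻¹ b.succ a.succ * vs b := by
        simp [Matrix.mulVec, dotProduct, Fin.sum_univ_succ]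
      rw [hmv]
      show (∑ b, (KJ J b a + kJ J a * n b) * vs b) + N * kJ J a * v = _
      simp only [KJ, kJ, Matrix.of_apply]
      have e : ∀ b, (J⁻¹ b.succ a.succ + J⁻¹ 0 a.succ * n b) * vs b
          = J⁻¹ b.succ a.succ * vs b + J⁻¹ 0 a.succ * (vs b * n b) := fun b => by ring
      rw [Finset.sum_congr rfl fun b _ => e b, Finset.sum_add_distrib, ← Finset.mul_sum]
      ring
  rw [key, Matrix.mulVec_mulVec, ← Matrix.transpose_mul, hKJ, Matrix.transpose_one,
    Matrix.one_mulVec]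
end
end

section
/- Decomposition and admissibility of the lapse-Wick-rotated scalar Lagrangian in the fiducial foliation (Eq. (3.4) and the damping property): let (N, n, ĝ) be real ADM data, θ ∈ ℝ, p ∈ ℝ^{d+1} and U ∈ ℝ. Then the complex matrices A_θ := A(−1, e^{−2iθ}N², n, ĝ), A₋ := A(−1, N², n, ĝ) and A₊ := A(+1, N², n, ĝ) are invertible, and −e^{−iθ}·(½ pᵀ A_θ⁻¹ p + U) = −cos θ·(½ pᵀ A₋⁻¹ p + U) + i sin θ·(½ pᵀ A₊⁻¹ p + U). Consequently, if θ ∈ (0, π) and U ≥ 0, the imaginary part of the lapse-Wick-rotated Lagrangian density equals sin θ·(½ pᵀ A₊⁻¹ p + U), which is nonnegative (and positive unless p = 0 and U = 0). -/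
/-!
Writing the ADM line element as `ελ dt² + ĝ(dx + n dt, dx + n dt)` one solves `A x = p`
explicitly, so `A(ε, λ, n, ĝ)` is invertible whenever `ελ ≠ 0` and
`pᵀ A⁻¹ p = (p₀ - nᵃ pₐ)² / (ελ) + p̂ᵀ ĝ⁻¹ p̂`.
Only the first term sees the lapse. For `λ = e^{-2iθ} N²` the prefactor `e^{-iθ}` of the
Lagrangian turns it by `e^{iθ} = cos θ + i sin θ`, while the spatial and potential terms are
turned by `e^{-iθ} = cos θ - i sin θ`; collecting the `cos θ` and `i sin θ` parts gives the
decomposition. The imaginary part is `sin θ` times the Euclidean density `½ pᵀ A₊⁻¹ p + U`, which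
is positive: `pᵀ A₊⁻¹ p = (p₀ - nᵃ pₐ)² / N² + p̂ᵀ ĝ⁻¹ p̂` with `ĝ⁻¹` positive definite.
-/

open Matrix Complex BigOperators

noncomputable section

variable {d : ℕ}

section Field

variable {K : Type*} [Field K]

lemma RingHom.map_matrix_inv {L : Type*} [Field L] {m : Type*} [Fintype m] [DecidableEq m]
    (f : K →+* L) (M : Matrix m m K) : M⁻¹.map f = (M.map f)⁻¹ := by
  rw [Matrix.inv_def, Matrix.inv_def, Ring.inverse_eq_inv', Ring.inverse_eq_inv', Matrix.map_smul',
    map_inv₀, RingHom.map_det, ← RingHom.mapMatrix_apply, RingHom.map_adjugate]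
  · rfl
  · exact map_mul f

def normalComponent {R : Type*} [CommRing R] (n : Fin d → R) (p : Fin (d+1) → R) : R :=
  vecHead p - n ⬝ᵥ vecTail p

-- The line element `ελ dt² + ĝ(dx + n dt, dx + n dt)`: the shift only enters through `x + x₀ n`.
lemma ADM_mulVec_cons {R : Type*} [CommRing R] (ε lam : R) (n : Fin d → R)
    (g : Matrix (Fin d) (Fin d) R) (x₀ : R) (x : Fin d → R) :
    ADM ε lam n g *ᵥ vecCons x₀ x =
      vecCons (ε * lam * x₀ + (g *ᵥ n) ⬝ᵥ (x₀ • n + x)) (g *ᵥ (x₀ • n + x)) := by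
  ext i
  refine Fin.cases ?_ (fun a => ?_) i <;>
    simp only [ADM, mulVec, dotProduct, Fin.sum_univ_succ, of_apply, Fin.cases_zero,
      Fin.cases_succ, cons_val_zero, cons_val_succ, Pi.add_apply, Pi.smul_apply, smul_eq_mul]
  · have hshift : (∑ a, ∑ b, g a b * n a * n b) * x₀ = ∑ a, (∑ b, g a b * n b) * (x₀ * n a) := by
      simp only [Finset.sum_mul]
      exact Finset.sum_congr rfl fun _ _ => Finset.sum_congr rfl fun _ _ => by ring
    simp only [add_mul, hshift, mul_add, Finset.sum_add_distrib]
    ring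
  · simp only [Finset.sum_mul, mul_add, Finset.sum_add_distrib]
    congr 1
    exact Finset.sum_congr rfl fun _ _ => by ring

def admSolution (ε lam : K) (n : Fin d → K) (g : Matrix (Fin d) (Fin d) K)
    (p : Fin (d+1) → K) : Fin (d+1) → K :=
  let t := (ε * lam)⁻¹ * normalComponent n p
  vecCons t (g⁻¹ *ᵥ vecTail p - t • n)

variable {ε lam : K} {n : Fin d → K} {g : Matrix (Fin d) (Fin d) K}

lemma ADM_mulVec_admSolution (h : ε * lam ≠ 0) (hg : IsUnit g.det) (hgs : g.IsSymm)
    (p : Fin (d+1) → K) : ADM ε lam n g *ᵥ admSolution ε lam n g p = p := by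
  have hp : g *ᵥ (g⁻¹ *ᵥ vecTail p) = vecTail p := by
    rw [mulVec_mulVec, mul_nonsing_inv g hg, one_mulVec]
  have hn : (g *ᵥ n) ⬝ᵥ (g⁻¹ *ᵥ vecTail p) = n ⬝ᵥ vecTail p := by
    rw [← hgs.eq, mulVec_transpose, ← dotProduct_mulVec, hgs.eq, hp]
  rw [admSolution, ADM_mulVec_cons, add_sub_cancel, hp, hn, ← mul_assoc, mul_inv_cancel₀ h,
    one_mul, normalComponent, sub_add_cancel, cons_head_tail]

lemma isUnit_ADM_det (h : ε * lam ≠ 0) (hg : IsUnit g.det) (hgs : g.IsSymm) :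
    IsUnit (ADM ε lam n g).det := by
  rw [← isUnit_iff_isUnit_det, ← mulVec_surjective_iff_isUnit]
  exact fun p => ⟨_, ADM_mulVec_admSolution h hg hgs p⟩

lemma ADM_inv_mulVec (h : ε * lam ≠ 0) (hg : IsUnit g.det) (hgs : g.IsSymm)
    (p : Fin (d+1) → K) : (ADM ε lam n g)⁻¹ *ᵥ p = admSolution ε lam n g p := by
  conv_lhs => rw [← ADM_mulVec_admSolution (n := n) h hg hgs p]
  rw [mulVec_mulVec, nonsing_inv_mul _ (isUnit_ADM_det h hg hgs), one_mulVec]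

lemma dotProduct_ADM_inv_mulVec (h : ε * lam ≠ 0) (hg : IsUnit g.det) (hgs : g.IsSymm)
    (p : Fin (d+1) → K) :
    p ⬝ᵥ (ADM ε lam n g)⁻¹ *ᵥ p =
      (ε * lam)⁻¹ * normalComponent n p ^ 2 + vecTail p ⬝ᵥ g⁻¹ *ᵥ vecTail p := by
  rw [ADM_inv_mulVec h hg hgs, admSolution, dotProduct_cons, dotProduct_sub, dotProduct_smul,
    dotProduct_comm (vecTail p) n, smul_eq_mul, normalComponent]
  ring

lemma map_dotProduct_ADM_inv_mulVec {L : Type*} [Field L] (f : K →+* L) {ε lam : L}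
    (h : ε * lam ≠ 0) (hg : IsUnit g.det) (hgs : g.IsSymm) (p : Fin (d+1) → K) :
    (f ∘ p) ⬝ᵥ (ADM ε lam (f ∘ n) (g.map f))⁻¹ *ᵥ (f ∘ p) =
      (ε * lam)⁻¹ * f (normalComponent n p) ^ 2 + f (vecTail p ⬝ᵥ g⁻¹ *ᵥ vecTail p) := by
  have hgf : IsUnit (g.map f).det := by
    simpa only [RingHom.map_det, RingHom.mapMatrix_apply] using hg.map f
  rw [dotProduct_ADM_inv_mulVec h hgf (hgs.map f), ← RingHom.map_matrix_inv, normalComponent,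
    normalComponent, map_sub, RingHom.map_dotProduct, RingHom.map_dotProduct]
  congr 3
  ext a
  exact (RingHom.map_mulVec f _ _ a).symm

end Field

section RealData

variable {n : Fin d → ℝ} {g : Matrix (Fin d) (Fin d) ℝ}

lemma Matrix.PosDef.isSymm (hg : g.PosDef) : g.IsSymm :=
  isHermitian_iff_isSymm.mp hg.isHermitian

lemma Matrix.PosDef.isUnit_det (hg : g.PosDef) : IsUnit g.det :=
  isUnit_iff_ne_zero.mpr hg.det_pos.ne'

lemma dotProduct_ADM_inv_mulVec_pos {ε lam : ℝ} (h : 0 < ε * lam) (hg : g.PosDef)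
    {p : Fin (d+1) → ℝ} (hp : p ≠ 0) : 0 < p ⬝ᵥ (ADM ε lam n g)⁻¹ *ᵥ p := by
  rw [dotProduct_ADM_inv_mulVec h.ne' hg.isUnit_det hg.isSymm]
  by_cases ht : vecTail p = 0
  · have hhead : vecHead p ≠ 0 := fun h0 => hp (by rw [← cons_head_tail p, h0, ht, cons_zero_zero])
    rw [normalComponent, ht, dotProduct_zero, sub_zero, mulVec_zero, dotProduct_zero, add_zero]
    positivity
  · have hq := hg.inv.dotProduct_mulVec_pos ht
    rw [star_trivial] at hq
    positivity

lemma dotProduct_ADM_inv_mulVec_nonneg {ε lam : ℝ} (h : 0 < ε * lam) (hg : g.PosDef)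
    (p : Fin (d+1) → ℝ) : 0 ≤ p ⬝ᵥ (ADM ε lam n g)⁻¹ *ᵥ p := by
  rcases eq_or_ne p 0 with rfl | hp
  · simp
  · exact (dotProduct_ADM_inv_mulVec_pos h hg hp).le

lemma half_dotProduct_ADM_inv_mulVec_add_pos {ε lam : ℝ} (h : 0 < ε * lam) (hg : g.PosDef)
    {p : Fin (d+1) → ℝ} {U : ℝ} (hU : 0 ≤ U) (hpU : ¬(p = 0 ∧ U = 0)) :
    0 < 1/2 * (p ⬝ᵥ (ADM ε lam n g)⁻¹ *ᵥ p) + U := by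
  rcases eq_or_ne p 0 with rfl | hp
  · have hU0 : 0 < U := hU.lt_of_ne' fun hU0 => hpU ⟨rfl, hU0⟩
    simpa using hU0
  · have := dotProduct_ADM_inv_mulVec_pos (n := n) h hg hp
    positivity

lemma isUnit_ADM_ofReal_det (hg : g.PosDef) {ε lam : ℂ} (h : ε * lam ≠ 0) :
    IsUnit (ADM ε lam (fun a => (n a : ℂ)) (g.map ofReal)).det := by
  have hgc : IsUnit (g.map ofReal).det := by
    have hmap := hg.isUnit_det.map ofRealHom
    rwa [ofRealHom.map_det] at hmap
  exact isUnit_ADM_det h hgc (hg.isSymm.map _)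

lemma ofReal_dotProduct_ADM_inv_mulVec (hg : g.PosDef) {ε lam : ℂ} (h : ε * lam ≠ 0)
    (p : Fin (d+1) → ℝ) :
    (fun μ => (p μ : ℂ)) ⬝ᵥ (ADM ε lam (fun a => (n a : ℂ)) (g.map ofReal))⁻¹ *ᵥ
        (fun μ => (p μ : ℂ)) =
      (ε * lam)⁻¹ * ((normalComponent n p : ℝ) : ℂ) ^ 2 + (vecTail p ⬝ᵥ g⁻¹ *ᵥ vecTail p : ℝ) :=
  map_dotProduct_ADM_inv_mulVec ofRealHom h hg.isUnit_det hg.isSymm p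

end RealData

lemma neg_exp_mul_sub_inv_wick_mul (θ : ℝ) (a b : ℂ) :
    -exp (-I * θ) * (b - (wick θ)⁻¹ * a) =
      -(Real.cos θ : ℂ) * (b - a) + I * (Real.sin θ : ℂ) * (b + a) := by
  have hexp : exp (-I * θ) = Real.cos θ - I * Real.sin θ := by
    rw [ofReal_cos, ofReal_sin, show -I * θ = -θ * I by ring, ← cos_sub_sin_I]
    ring
  have hexp_wick : exp (-I * θ) * (wick θ)⁻¹ = Real.cos θ + I * Real.sin θ := by
    rw [wick, ← Complex.exp_neg, ← Complex.exp_add, ofReal_cos, ofReal_sin,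
      show -I * θ + -(-2 * I * θ) = θ * I by ring, ← cos_add_sin_I]
    ring
  linear_combination (-b) * hexp + a * hexp_wick

theorem lapse_wick_fiducial_admissibility_general (d : ℕ) (θ : ℝ)
    (N : ℝ) (hN : 0 < N) (n : Fin d → ℝ)
    (g : Matrix (Fin d) (Fin d) ℝ) (hg : g.PosDef)
    (p : Fin (d+1) → ℝ) (U : ℝ) :
    let nc : Fin d → ℂ := fun a => (n a : ℂ)
    let gc : Matrix (Fin d) (Fin d) ℂ := g.map Complex.ofReal
    let Aθ : Matrix (Fin (d+1)) (Fin (d+1)) ℂ := ADM (-1 : ℂ) (wick θ * (N:ℂ)^2) nc gc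
    let Am : Matrix (Fin (d+1)) (Fin (d+1)) ℂ := ADM (-1 : ℂ) ((N:ℂ)^2) nc gc
    let Ap : Matrix (Fin (d+1)) (Fin (d+1)) ℂ := ADM (1 : ℂ) ((N:ℂ)^2) nc gc
    let pc : Fin (d+1) → ℂ := fun μ => (p μ : ℂ)
    let Lθ : ℂ := -Complex.exp (-Complex.I * θ) *
      ((1/2 : ℂ) * (pc ⬝ᵥ Aθ⁻¹.mulVec pc) + (U : ℂ))
    let Qp : ℝ := (1/2) * (p ⬝ᵥ (ADM (1:ℝ) (N^2) n g)⁻¹.mulVec p) + U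
    IsUnit Aθ.det ∧ IsUnit Am.det ∧ IsUnit Ap.det ∧
    (Lθ = -(Real.cos θ : ℂ) * ((1/2 : ℂ) * (pc ⬝ᵥ Am⁻¹.mulVec pc) + (U : ℂ))
      + Complex.I * (Real.sin θ : ℂ) * ((1/2 : ℂ) * (pc ⬝ᵥ Ap⁻¹.mulVec pc) + (U : ℂ))) ∧
    (θ ∈ Set.Ioo 0 Real.pi → 0 ≤ U →
      Lθ.im = Real.sin θ * Qp ∧ 0 ≤ Real.sin θ * Qp ∧
      (¬(p = 0 ∧ U = 0) → 0 < Real.sin θ * Qp)) := by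
  intro nc gc Aθ Am Ap pc Lθ Qp
  have hNc : (N : ℂ) ≠ 0 := ofReal_ne_zero.mpr hN.ne'
  have hθ_ne : (-1 : ℂ) * (wick θ * (N:ℂ)^2) ≠ 0 := by simp [wick, hNc]
  have hm_ne : (-1 : ℂ) * (N:ℂ)^2 ≠ 0 := by simp [hNc]
  have hp_ne : (1 : ℂ) * (N:ℂ)^2 ≠ 0 := by simp [hNc]
  set a : ℝ := (1/2) * normalComponent n p ^ 2 / N ^ 2 with ha
  set b : ℝ := (1/2) * (vecTail p ⬝ᵥ g⁻¹ *ᵥ vecTail p) + U with hb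
  have hform : ∀ {ε lam : ℂ}, ε * lam ≠ 0 →
      (1/2 : ℂ) * (pc ⬝ᵥ (ADM ε lam nc gc)⁻¹ *ᵥ pc) + U = b + (ε * lam)⁻¹ * (N ^ 2 * a) := by
    intro ε lam h
    rw [ofReal_dotProduct_ADM_inv_mulVec hg h, ha, hb]
    push_cast
    field_simp
    ring
  have hdecomp : Lθ = -(Real.cos θ : ℂ) * (b - a) + I * (Real.sin θ : ℂ) * (b + a) := by
    rw [← neg_exp_mul_sub_inv_wick_mul]
    simp only [Lθ, Aθ, hform hθ_ne]
    field_simp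
    ring
  have hQp : Qp = b + a := by
    simp only [Qp, ha, hb]
    rw [dotProduct_ADM_inv_mulVec (by positivity) hg.isUnit_det hg.isSymm p]
    ring
  refine ⟨isUnit_ADM_ofReal_det hg hθ_ne, isUnit_ADM_ofReal_det hg hm_ne,
    isUnit_ADM_ofReal_det hg hp_ne, ?_, fun hθ hU => ?_⟩
  · simp only [hdecomp, Am, Ap, hform hm_ne, hform hp_ne]
    field_simp
    ring
  have hsin : 0 < Real.sin θ := Real.sin_pos_of_pos_of_lt_pi hθ.1 hθ.2
  have hN2 : (0 : ℝ) < 1 * N ^ 2 := by positivity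
  have hQp_nonneg : 0 ≤ Qp := by
    have := dotProduct_ADM_inv_mulVec_nonneg (n := n) hN2 hg p
    positivity
  refine ⟨?_, mul_nonneg hsin.le hQp_nonneg,
    fun hpU => mul_pos hsin (half_dotProduct_ADM_inv_mulVec_add_pos hN2 hg hU hpU)⟩
  rw [hdecomp, hQp]
  simp [mul_im, -ofReal_sin, -ofReal_cos]

/-- Eq. (3.4) and the damping property: decomposition and admissibility of the
lapse-Wick-rotated scalar Lagrangian in the fiducial foliation. -/
theorem lapse_wick_fiducial_admissibility (d : ℕ) (hd : 1 ≤ d) (θ : ℝ)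
    (N : ℝ) (hN : 0 < N) (n : Fin d → ℝ)
    (g : Matrix (Fin d) (Fin d) ℝ) (hgs : g.IsSymm) (hg : g.PosDef)
    (p : Fin (d+1) → ℝ) (U : ℝ) :
    let nc : Fin d → ℂ := fun a => (n a : ℂ)
    let gc : Matrix (Fin d) (Fin d) ℂ := g.map Complex.ofReal
    let Aθ : Matrix (Fin (d+1)) (Fin (d+1)) ℂ := ADM (-1 : ℂ) (wick θ * (N:ℂ)^2) nc gc
    let Am : Matrix (Fin (d+1)) (Fin (d+1)) ℂ := ADM (-1 : ℂ) ((N:ℂ)^2) nc gc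
    let Ap : Matrix (Fin (d+1)) (Fin (d+1)) ℂ := ADM (1 : ℂ) ((N:ℂ)^2) nc gc
    let pc : Fin (d+1) → ℂ := fun μ => (p μ : ℂ)
    let Lθ : ℂ := -Complex.exp (-Complex.I * θ) *
      ((1/2 : ℂ) * (pc ⬝ᵥ Aθ⁻¹.mulVec pc) + (U : ℂ))
    let Qp : ℝ := (1/2) * (p ⬝ᵥ (ADM (1:ℝ) (N^2) n g)⁻¹.mulVec p) + U
    IsUnit Aθ.det ∧ IsUnit Am.det ∧ IsUnit Ap.det ∧
    (Lθ = -(Real.cos θ : ℂ) * ((1/2 : ℂ) * (pc ⬝ᵥ Am⁻¹.mulVec pc) + (U : ℂ))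
      + Complex.I * (Real.sin θ : ℂ) * ((1/2 : ℂ) * (pc ⬝ᵥ Ap⁻¹.mulVec pc) + (U : ℂ))) ∧
    (θ ∈ Set.Ioo 0 Real.pi → 0 ≤ U →
      Lθ.im = Real.sin θ * Qp ∧ 0 ≤ Real.sin θ * Qp ∧
      (¬(p = 0 ∧ U = 0) → 0 < Real.sin θ * Qp)) :=
  lapse_wick_fiducial_admissibility_general d θ N hN n g hg p U
end
end

section
/- Bi-transversal component of the scalar-field energy-momentum tensor and the weak energy condition (Eq. (3.2)): let ε ∈ {−1,+1}, let (N, n, ĝ) be real ADM data, p ∈ ℝ^{d+1}, U ∈ ℝ, and set G := A(ε, N², n, ĝ) (which is invertible), Q := pᵀ G⁻¹ p, and define the (d+1)×(d+1) real matrix T by T_{μν} := p_μ p_ν − ½ G_{μν} Q − G_{μν} U. Let m := (1, −n¹, …, −n^d)ᵀ ∈ ℝ^{d+1} and p_s := (p₁,…,p_d). Then N⁻² mᵀ T m = (1/(2N²))(p₀ − Σ_a n^a p_a)² − (ε/2) p_sᵀ ĝ⁻¹ p_s − ε U. In particular, for ε = −1 and U ≥ 0 one has mᵀ T m ≥ 0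 (the weak energy condition for a minimally coupled scalar field with nonnegative potential). -/
open Matrix Complex BigOperators

noncomputable section

variable {d : ℕ}

/-- Eq. (3.2): bi-transversal component of the scalar-field energy-momentum tensor,
and the weak energy condition for `ε = -1`, `U ≥ 0`. -/
theorem energy_momentum_bitransversal (d : ℕ) (hd : 1 ≤ d) (ε : ℝ)
    (hε : ε = -1 ∨ ε = 1)
    (N : ℝ) (hN : 0 < N) (n : Fin d → ℝ)
    (g : Matrix (Fin d) (Fin d) ℝ) (hgs : g.IsSymm) (hg : g.PosDef)
    (p : Fin (d+1) → ℝ) (U : ℝ) :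
    let G : Matrix (Fin (d+1)) (Fin (d+1)) ℝ := ADM ε (N^2) n g
    let Q : ℝ := p ⬝ᵥ G⁻¹.mulVec p
    let T : Matrix (Fin (d+1)) (Fin (d+1)) ℝ :=
      Matrix.of fun μ ν => p μ * p ν - (1/2) * G μ ν * Q - G μ ν * U
    let m : Fin (d+1) → ℝ := Fin.cases 1 (fun a => -n a)
    IsUnit G.det ∧
    (N⁻¹^2 * (m ⬝ᵥ T.mulVec m)
      = (1/(2*N^2)) * (p 0 - ∑ a, n a * p a.succ)^2
        - (ε/2) * (∑ a, ∑ b, p a.succ * g⁻¹ a b * p b.succ) - ε * U) ∧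
    (ε = -1 → 0 ≤ U → 0 ≤ m ⬝ᵥ T.mulVec m) := by

  intro G Q T m
  have hNne : N ≠ 0 := hN.ne'
  have hN2 : N^2 ≠ 0 := pow_ne_zero _ hNne
  have hεne : ε ≠ 0 := by rcases hε with h|h <;> simp [h]
  have hεN : ε * N^2 ≠ 0 := mul_ne_zero hεne hN2
  have hgdet : IsUnit g.det := hg.det_pos.ne'.isUnit
  have hgg : g * g⁻¹ = 1 := Matrix.mul_nonsing_inv g hgdet
  have hsym : ∀ a b, g a b = g b a := fun a b => (hgs.apply a b).symm
  have hgid : ∀ a b, ∑ c, g a c * g⁻¹ c b = if a = b then 1 else 0 := by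
    intro a b
    have := congrFun (congrFun hgg a) b
    rwa [Matrix.mul_apply, Matrix.one_apply] at this
  set Mi : Matrix (Fin (d+1)) (Fin (d+1)) ℝ := Matrix.of fun i j =>
    Fin.cases (Fin.cases (1/(ε*N^2)) (fun b => -n b/(ε*N^2)) j)
      (fun a => Fin.cases (-n a/(ε*N^2)) (fun b => g⁻¹ a b + n a * n b/(ε*N^2)) j) i
    with hMidef
  have key : ∀ b, ∑ a, (∑ c, g a c * n c) * g⁻¹ a b = n b := by
    intro b
    calc ∑ a, (∑ c, g a c * n c) * g⁻¹ a b
        = ∑ a, ∑ c, n c * (g c a * g⁻¹ a b) := by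
          refine Finset.sum_congr rfl fun a _ => ?_
          rw [Finset.sum_mul]
          exact Finset.sum_congr rfl fun c _ => by rw [hsym a c]; ring
      _ = ∑ c, n c * ∑ a, g c a * g⁻¹ a b := by
          rw [Finset.sum_comm]
          exact Finset.sum_congr rfl fun c _ => by rw [Finset.mul_sum]
      _ = n b := by simp [hgid]
  have hGM : G * Mi = 1 := by
    ext i j
    rw [Matrix.mul_apply]
    refine Fin.cases ?_ (fun a => ?_) i <;> refine Fin.cases ?_ (fun b => ?_) j <;>
      simp only [G, ADM, hMidef, Matrix.of_apply, Fin.cases_zero, Fin.cases_succ,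
        Fin.sum_univ_succ]
    · rw [Matrix.one_apply_eq]
      have h1 : ∑ a, (∑ c, g a c * n c) * (-n a/(ε*N^2))
          = (∑ a, ∑ c, g a c * n a * n c) * (-(1/(ε*N^2))) := by
        rw [Finset.sum_mul]
        refine Finset.sum_congr rfl fun a _ => ?_
        rw [Finset.sum_mul, Finset.sum_mul]
        exact Finset.sum_congr rfl fun c _ => by ring
      rw [h1]; field_simp; ring
    · rw [Matrix.one_apply_ne (Ne.symm (Fin.succ_ne_zero b))]
      have h1 : ∑ a, (∑ c, g a c * n c) * (g⁻¹ a b + n a * n b/(ε*N^2))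
          = (∑ a, (∑ c, g a c * n c) * g⁻¹ a b)
            + (∑ a, ∑ c, g a c * n a * n c) * (n b/(ε*N^2)) := by
        rw [Finset.sum_mul, ← Finset.sum_add_distrib]
        refine Finset.sum_congr rfl fun a _ => ?_
        rw [mul_add]
        congr 1
        rw [Finset.sum_mul, Finset.sum_mul]
        exact Finset.sum_congr rfl fun c _ => by ring
      rw [h1, key b]
      field_simp
      ring
    · rw [Matrix.one_apply_ne (Fin.succ_ne_zero a)]
      have h1 : ∑ c, g a c * (-n c/(ε*N^2)) = (∑ c, g a c * n c) * (-(1/(ε*N^2))) := by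
        rw [Finset.sum_mul]
        exact Finset.sum_congr rfl fun c _ => by ring
      rw [h1]; field_simp; ring
    · have h1 : ∑ c, g a c * (g⁻¹ c b + n c * n b/(ε*N^2))
          = (∑ c, g a c * g⁻¹ c b) + (∑ c, g a c * n c) * (n b/(ε*N^2)) := by
        rw [Finset.sum_mul, ← Finset.sum_add_distrib]
        refine Finset.sum_congr rfl fun c _ => ?_
        rw [mul_add]
        congr 1
        ring
      rw [h1, hgid a b, Matrix.one_apply]
      simp only [Fin.succ_inj]
      have h2 : (∑ c, g a c * n c) * (-n b/(ε*N^2))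
          + (∑ c, g a c * n c) * (n b/(ε*N^2)) = 0 := by ring
      split_ifs <;> linarith [h2]
  have hdetG : IsUnit G.det := Matrix.isUnit_det_of_right_inverse hGM
  have hGinv : G⁻¹ = Mi := Matrix.inv_eq_right_inv hGM
  -- split Mi into a rank-one piece and the embedded spatial inverse
  set E : Matrix (Fin (d+1)) (Fin (d+1)) ℝ := Matrix.of fun i j =>
    Fin.cases 0 (fun a => Fin.cases 0 (fun b => g⁻¹ a b) j) i with hEdef
  have hMisplit : Mi = (1/(ε*N^2)) • Matrix.vecMulVec m m + E := by
    ext i j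
    refine Fin.cases ?_ (fun a => ?_) i <;> refine Fin.cases ?_ (fun b => ?_) j <;>
      simp only [hMidef, hEdef, Matrix.of_apply, Fin.cases_zero, Fin.cases_succ,
        Matrix.add_apply, Matrix.smul_apply, Matrix.vecMulVec_apply, m, smul_eq_mul] <;>
      ring
  set s : ℝ := p 0 - ∑ a, n a * p a.succ with hsdef
  set B : ℝ := ∑ a, ∑ b, p a.succ * g⁻¹ a b * p b.succ with hBdef
  have hpm : p ⬝ᵥ m = s := by
    simp only [dotProduct, m, Fin.sum_univ_succ, Fin.cases_zero, Fin.cases_succ,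
      hsdef, mul_one]
    congr 1
    rw [← Finset.sum_neg_distrib]
    exact Finset.sum_congr rfl fun a _ => by ring
  have hmp : m ⬝ᵥ p = s := by rw [dotProduct_comm, hpm]
  have hvmp : Matrix.vecMulVec m m *ᵥ p = (m ⬝ᵥ p) • m := by
    ext i
    simp only [Matrix.mulVec, dotProduct, Matrix.vecMulVec_apply, Pi.smul_apply,
      smul_eq_mul, Finset.sum_mul]
    exact Finset.sum_congr rfl fun j _ => by ring
  have hEp : p ⬝ᵥ E *ᵥ p = B := by
    simp only [Matrix.mulVec, dotProduct, hEdef, Matrix.of_apply, Fin.sum_univ_succ,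
      Fin.cases_zero, Fin.cases_succ, zero_mul, mul_zero, Finset.sum_const_zero, zero_add,
      hBdef]
    refine Finset.sum_congr rfl fun a _ => ?_
    rw [Finset.mul_sum]
    exact Finset.sum_congr rfl fun b _ => by ring
  have hQ : Q = s^2/(ε*N^2) + B := by
    show p ⬝ᵥ G⁻¹ *ᵥ p = _
    rw [hGinv, hMisplit, Matrix.add_mulVec, dotProduct_add,
      Matrix.smul_mulVec, dotProduct_smul, hvmp, dotProduct_smul,
      hmp, hpm, hEp]
    simp only [smul_eq_mul]
    ring
  -- G m = ε N² e₀
  have hGm : G *ᵥ m = fun i => Fin.cases (ε*N^2) (fun _ => 0) i := by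
    ext i
    refine Fin.cases ?_ (fun a => ?_) i <;>
      simp only [Matrix.mulVec, dotProduct, G, ADM, Matrix.of_apply,
        Fin.sum_univ_succ, Fin.cases_zero, Fin.cases_succ, m, mul_one]
    · have h1 : ∑ b, (∑ c, g b c * n c) * (-n b)
          = (∑ a, ∑ c, g a c * n a * n c) * (-1) := by
        rw [Finset.sum_mul]
        refine Finset.sum_congr rfl fun a _ => ?_
        rw [Finset.sum_mul, Finset.sum_mul]
        exact Finset.sum_congr rfl fun c _ => by ring
      rw [h1]; ring
    · have h1 : ∑ c, g a c * (-n c) = (∑ c, g a c * n c) * (-1) := by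
        rw [Finset.sum_mul]
        exact Finset.sum_congr rfl fun c _ => by ring
      rw [h1]; ring
  have hmGm : m ⬝ᵥ G *ᵥ m = ε * N^2 := by
    rw [hGm]
    simp [dotProduct, Fin.sum_univ_succ, m]
  have hTsplit : T = Matrix.vecMulVec p p - (1/2*Q + U) • G := by
    ext i j
    simp only [T, Matrix.of_apply, Matrix.sub_apply, Matrix.smul_apply,
      Matrix.vecMulVec_apply, smul_eq_mul]
    ring
  have hvm2 : Matrix.vecMulVec p p *ᵥ m = (p ⬝ᵥ m) • p := by
    ext i
    simp only [Matrix.mulVec, dotProduct, Matrix.vecMulVec_apply, Pi.smul_apply,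
      smul_eq_mul]
    rw [Finset.sum_mul]
    exact Finset.sum_congr rfl fun j _ => by ring
  have hTm : m ⬝ᵥ T *ᵥ m = s^2 - (1/2*Q + U) * (ε * N^2) := by
    rw [hTsplit, Matrix.sub_mulVec, dotProduct_sub, Matrix.smul_mulVec,
      dotProduct_smul, hvm2, dotProduct_smul, hpm, hmp, hmGm]
    simp only [smul_eq_mul]
    ring
  have hmain : N⁻¹^2 * (m ⬝ᵥ T *ᵥ m)
      = (1/(2*N^2)) * (p 0 - ∑ a, n a * p a.succ)^2
        - (ε/2) * (∑ a, ∑ b, p a.succ * g⁻¹ a b * p b.succ) - ε * U := by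
    rw [hTm, hQ, ← hsdef, ← hBdef]
    field_simp
    ring
  refine ⟨hdetG, hmain, ?_⟩
  intro hεm hU
  have hB : 0 ≤ B := by
    have h := (hg.inv.posSemidef).dotProduct_mulVec_nonneg (fun a => p a.succ)
    have hrw : (star (fun a => p a.succ) : Fin d → ℝ) ⬝ᵥ g⁻¹ *ᵥ (fun a => p a.succ) = B := by
      simp only [star_trivial, dotProduct, Matrix.mulVec, hBdef]
      refine Finset.sum_congr rfl fun a _ => ?_
      rw [Finset.mul_sum]
      exact Finset.sum_congr rfl fun b _ => by ring
    rwa [hrw] at h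
  have hX : m ⬝ᵥ T *ᵥ m = N^2 * ((1/(2*N^2)) * s^2 - (ε/2) * B - ε * U) := by
    rw [← hsdef, ← hBdef] at hmain
    have : m ⬝ᵥ T *ᵥ m = N^2 * (N⁻¹^2 * (m ⬝ᵥ T *ᵥ m)) := by
      field_simp
    rw [this, hmain]
  rw [hX, hεm]
  have h1 : 0 ≤ (1/(2*N^2)) * s^2 := by positivity
  have h2 : 0 ≤ (1/(2*N^2)) * s^2 - (-1/2) * B - (-1) * U := by linarith
  have h3 : (0:ℝ) ≤ N^2 := sq_nonneg N
  nlinarith [mul_nonneg h3 h2]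
end
end

section
/- Two-sided bounds for the Zimmermann-type lapse-Wick-rotated Minkowski propagator (Eq. (B.3)): let θ ∈ (0, π), p₀ ∈ ℝ, and q > 0 (where q = p² + m² is the spatial momentum squared plus mass squared). Then the denominator p₀² − e^{−2iθ} q is nonzero, and the propagator G_θ := i e^{−iθ}/(p₀² − e^{−2iθ} q) satisfies 1/(p₀² + q) ≤ |G_θ| ≤ (1/sin θ)·(1/(p₀² + q)). In particular |G_θ| is bounded above and below by multiples of the Euclidean propagator 1/(p_E² + m²) with p_E² = p₀² + p². -/
open Complex

/-- Eq. (B.3): two-sided bounds for the Zimmermann-type lapse-Wick-rotated Minkowski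
propagator `G_θ = i e^{-iθ}/(p₀² - e^{-2iθ} q)`, `q = p² + m² > 0`, in terms of the
Euclidean propagator `1/(p₀² + q)`. -/
theorem zimmermann_propagator_bounds (θ : ℝ) (hθ : θ ∈ Set.Ioo 0 Real.pi)
    (p0 q : ℝ) (hq : 0 < q) :
    (p0 : ℂ)^2 - Complex.exp (-2 * Complex.I * θ) * (q : ℂ) ≠ 0 ∧
    1 / (p0^2 + q) ≤ ‖Complex.I * Complex.exp (-Complex.I * θ) /
      ((p0 : ℂ)^2 - Complex.exp (-2 * Complex.I * θ) * (q : ℂ))‖ ∧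
    ‖Complex.I * Complex.exp (-Complex.I * θ) /
      ((p0 : ℂ)^2 - Complex.exp (-2 * Complex.I * θ) * (q : ℂ))‖
      ≤ (1 / Real.sin θ) * (1 / (p0^2 + q)) := by
  obtain ⟨hθ0, hθπ⟩ := hθ
  have hs : 0 < Real.sin θ := Real.sin_pos_of_pos_of_lt_pi hθ0 hθπ
  have hpq : 0 < p0 ^ 2 + q := by positivity
  set D : ℂ := (p0 : ℂ)^2 - Complex.exp (-2 * Complex.I * θ) * (q : ℂ) with hD
  have hexp : Complex.exp (-2 * Complex.I * θ) = Complex.exp ((↑(-2 * θ) : ℝ) * Complex.I) := by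
    congr 1; push_cast; ring
  have hp2 : ((p0 : ℂ)^2) = ((p0^2 : ℝ) : ℂ) := by push_cast; ring
  have hre : D.re = p0 ^ 2 - Real.cos (2 * θ) * q := by
    rw [hD, hexp, hp2]
    simp only [Complex.sub_re, Complex.mul_re, Complex.exp_ofReal_mul_I_re,
      Complex.exp_ofReal_mul_I_im, Complex.ofReal_re, Complex.ofReal_im,
      Real.cos_neg, Real.sin_neg]
    rw [show ((-2 : ℝ) * θ) = -(2 * θ) by ring, Real.cos_neg]
    ring
  have him : D.im = Real.sin (2 * θ) * q := by
    rw [hD, hexp, hp2]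
    simp only [Complex.sub_im, Complex.mul_im, Complex.exp_ofReal_mul_I_re,
      Complex.exp_ofReal_mul_I_im, Complex.ofReal_re, Complex.ofReal_im]
    rw [show ((-2 : ℝ) * θ) = -(2 * θ) by ring, Real.sin_neg]
    ring
  have hsc : Real.sin (2 * θ) ^ 2 + Real.cos (2 * θ) ^ 2 = 1 := Real.sin_sq_add_cos_sq _
  have hc2 : Real.cos (2 * θ) = 1 - 2 * Real.sin θ ^ 2 := by
    rw [Real.cos_two_mul]
    nlinarith [Real.sin_sq_add_cos_sq θ]
  have hsc1 : Real.sin θ ^ 2 + Real.cos θ ^ 2 = 1 := Real.sin_sq_add_cos_sq θ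
  have hnorm : Complex.normSq D = D.re ^ 2 + D.im ^ 2 := by
    rw [Complex.normSq_apply]; ring
  have hq2 : (Real.sin (2 * θ) * q) ^ 2 + (Real.cos (2 * θ) * q) ^ 2 = q ^ 2 := by
    rw [mul_pow, mul_pow, ← add_mul, hsc, one_mul]
  have hupper : Complex.normSq D ≤ (p0 ^ 2 + q) ^ 2 := by
    rw [hnorm, hre, him]
    nlinarith [hq2, mul_nonneg (mul_nonneg (sq_nonneg p0) hq.le)
      (by linarith [Real.neg_one_le_cos (2 * θ)] : (0:ℝ) ≤ 1 + Real.cos (2 * θ))]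
  have hs2c : (Real.sin (2 * θ) * q) ^ 2 = q ^ 2 - ((1 - 2 * Real.sin θ ^ 2) * q) ^ 2 := by
    rw [← hc2]; linarith [hq2]
  have hkey : 0 ≤ (1 - Real.sin θ ^ 2) * (p0 ^ 2 - q) ^ 2 := by
    rw [show (1 - Real.sin θ ^ 2) = Real.cos θ ^ 2 from by linarith]; positivity
  have hlower : (Real.sin θ * (p0 ^ 2 + q)) ^ 2 ≤ Complex.normSq D := by
    rw [hnorm, hre, him, hc2, hs2c]
    nlinarith [hkey]
  have habs : ‖D‖ = Real.sqrt (Complex.normSq D) := Complex.norm_def D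
  have habs_upper : ‖D‖ ≤ p0 ^ 2 + q := by
    rw [habs]
    calc Real.sqrt (Complex.normSq D) ≤ Real.sqrt ((p0 ^ 2 + q) ^ 2) :=
          Real.sqrt_le_sqrt hupper
      _ = p0 ^ 2 + q := Real.sqrt_sq hpq.le
  have habs_lower : Real.sin θ * (p0 ^ 2 + q) ≤ ‖D‖ := by
    rw [habs]
    calc Real.sin θ * (p0 ^ 2 + q) = Real.sqrt ((Real.sin θ * (p0 ^ 2 + q)) ^ 2) :=
          (Real.sqrt_sq (by positivity)).symm
      _ ≤ Real.sqrt (Complex.normSq D) := Real.sqrt_le_sqrt hlower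
  have hDpos : 0 < ‖D‖ := lt_of_lt_of_le (by positivity) habs_lower
  have hDne : D ≠ 0 := by
    intro h; rw [h] at hDpos; simp at hDpos
  have hnum : ‖Complex.I * Complex.exp (-Complex.I * θ)‖ = 1 := by
    rw [norm_mul, Complex.norm_I, Complex.norm_exp]
    simp
  have hG : ‖Complex.I * Complex.exp (-Complex.I * θ) / D‖ = 1 / ‖D‖ := by
    rw [norm_div, hnum]
  refine ⟨hDne, ?_, ?_⟩
  · rw [hG]
    exact one_div_le_one_div_of_le hDpos habs_upper
  · rw [hG]
    have heq : (1 / Real.sin θ) * (1 / (p0 ^ 2 + q)) = 1 / (Real.sin θ * (p0 ^ 2 + q)) := by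
      field_simp
    rw [heq]
    exact one_div_le_one_div_of_le (by positivity) habs_lower
end

section
/- The lapse-Wick-rotated de Sitter embedding distance avoids the Legendre branch cut: let θ ∈ (0, π), H ≠ 0, d ≥ 1, and let (t, x), (t', x') ∈ ℝ × ℝ^d with (t, x) ≠ (t', x'). Define the complex number d_θ := cosh(H(t − t')) − (H²/2)·e^{2iθ}·e^{(t + t')H}·‖x − x'‖², where ‖·‖ is the Euclidean norm on ℝ^d. Then it is not the case that Im d_θ = 0 and Re d_θ ≤ 1; i.e., d_θ does not lie on the cut (−∞, 1] ⊂ ℝ ⊂ ℂ. -/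
/-!
Writing `d_θ = c - w e^{2iθ}` with `c = cosh(H(t-t')) ≥ 1` and `w ≥ 0` real, we get
`Im d_θ = -w sin 2θ` and `Re d_θ = c - w cos 2θ`. If `w = 0` the points differ in time, so
`c > 1`. If `w > 0`, a real `d_θ` forces `sin 2θ = 0`, i.e. `θ = π/2` on `(0, π)`, and then
`Re d_θ = c + w > 1`.
-/

open Complex

theorem Real.cos_two_mul_eq_neg_one_of_sin_two_mul_eq_zero {θ : ℝ}
    (hθ : θ ∈ Set.Ioo 0 Real.pi) (h : Real.sin (2 * θ) = 0) : Real.cos (2 * θ) = -1 := by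
  have hsin : Real.sin θ ≠ 0 := (Real.sin_pos_of_pos_of_lt_pi hθ.1 hθ.2).ne'
  have hcos : Real.cos θ = 0 := by
    rw [Real.sin_two_mul] at h
    simpa [hsin] using h
  rw [Real.cos_two_mul, hcos]
  norm_num

theorem ofReal_sub_ofReal_mul_exp_two_mul_I_avoids_cut {c w θ : ℝ}
    (hθ : θ ∈ Set.Ioo 0 Real.pi) (hc : 1 ≤ c) (hw : 0 ≤ w) (hcw : 1 < c ∨ 0 < w) :
    let z : ℂ := (c : ℂ) - (w : ℂ) * exp (2 * I * θ)
    ¬(z.im = 0 ∧ z.re ≤ 1) := by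
  intro z
  have hexp : exp (2 * I * θ) = exp (((2 * θ : ℝ) : ℂ) * I) := by push_cast; ring_nf
  have him : z.im = -(w * Real.sin (2 * θ)) := by
    simp only [z, hexp, sub_im, ofReal_im, mul_im, ofReal_re, exp_ofReal_mul_I_re,
      exp_ofReal_mul_I_im]
    ring
  have hre : z.re = c - w * Real.cos (2 * θ) := by
    simp only [z, hexp, sub_re, ofReal_re, mul_re, ofReal_im, exp_ofReal_mul_I_re,
      exp_ofReal_mul_I_im]
    ring
  rintro ⟨h_im, h_re⟩
  rw [hre] at h_re
  rcases hw.eq_or_lt with rfl | hw_pos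
  · rcases hcw with hc' | hw' <;> linarith
  · have hsin : Real.sin (2 * θ) = 0 := by
      rw [him, neg_eq_zero] at h_im
      exact (mul_eq_zero.mp h_im).resolve_left hw_pos.ne'
    rw [Real.cos_two_mul_eq_neg_one_of_sin_two_mul_eq_zero hθ hsin] at h_re
    linarith

theorem deSitter_embedding_distance_avoids_cut_general (θ : ℝ) (hθ : θ ∈ Set.Ioo 0 Real.pi)
    (H : ℝ) (hH : H ≠ 0) (d : ℕ)
    (t t' : ℝ) (x x' : EuclideanSpace ℝ (Fin d)) (hne : (t, x) ≠ (t', x')) :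
    let dθ : ℂ := ((Real.cosh (H * (t - t')) : ℝ) : ℂ)
      - ((H^2 / 2 : ℝ) : ℂ) * Complex.exp (2 * Complex.I * θ)
        * ((Real.exp ((t + t') * H) : ℝ) : ℂ) * ((‖x - x'‖^2 : ℝ) : ℂ)
    ¬(dθ.im = 0 ∧ dθ.re ≤ 1) := by
  intro dθ
  set w : ℝ := H ^ 2 / 2 * Real.exp ((t + t') * H) * ‖x - x'‖ ^ 2
  have hdθ : dθ = (Real.cosh (H * (t - t')) : ℂ) - (w : ℂ) * exp (2 * I * θ) := by
    simp only [dθ, w]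
    push_cast
    ring
  have hcw : 1 < Real.cosh (H * (t - t')) ∨ 0 < w := by
    by_cases hx : x = x'
    · have ht : t ≠ t' := fun ht => hne (by rw [ht, hx])
      exact Or.inl (Real.one_lt_cosh.mpr (mul_ne_zero hH (sub_ne_zero.mpr ht)))
    · have hnorm : 0 < ‖x - x'‖ := norm_pos_iff.mpr (sub_ne_zero.mpr hx)
      exact Or.inr (by positivity)
  rw [hdθ]
  exact ofReal_sub_ofReal_mul_exp_two_mul_I_avoids_cut hθ (Real.one_le_cosh _) (by positivity) hcw

/-- The lapse-Wick-rotated de Sitter embedding distance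
`d_θ = cosh(H(t-t')) - (H²/2) e^{2iθ} e^{(t+t')H} ‖x-x'‖²` avoids the Legendre
branch cut `(-∞, 1] ⊂ ℝ ⊂ ℂ` for `θ ∈ (0, π)` at non-coincident points. -/
theorem deSitter_embedding_distance_avoids_cut (θ : ℝ) (hθ : θ ∈ Set.Ioo 0 Real.pi)
    (H : ℝ) (hH : H ≠ 0) (d : ℕ) (hd : 1 ≤ d)
    (t t' : ℝ) (x x' : EuclideanSpace ℝ (Fin d)) (hne : (t, x) ≠ (t', x')) :
    let dθ : ℂ := ((Real.cosh (H * (t - t')) : ℝ) : ℂ)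
      - ((H^2 / 2 : ℝ) : ℂ) * Complex.exp (2 * Complex.I * θ)
        * ((Real.exp ((t + t') * H) : ℝ) : ℂ) * ((‖x - x'‖^2 : ℝ) : ℂ)
    ¬(dθ.im = 0 ∧ dθ.re ≤ 1) :=
  deSitter_embedding_distance_avoids_cut_general θ hθ H hH d t t' x x' hne
end
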